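/- Let s ∈ (1/2, 1) and let g(z) = Γ(2s−z) Γ(z+1)/Γ(2s) − sin(π(s−z))/sin(πs). Then there exists M > 0 (possibly depending on s) such that g has no zeros in the region {z ∈ ℂ : Re z ∈ (2s−1, s+1/2) and Im z ∈ [0,M]}. -/

import Mathlib

/-!
On the real segment `(2s - 1, 2s)` the function `g` is positive: log-convexity of `Γ` gives
`Γ(2s - x) Γ(x + 1) ≥ Γ(2s)`, while `sin (π (s - x)) < sin (π s)`. Since `g` is analytic near
the closed segment `[2s - 1, s + 1/2]` and does not vanish identically near any of its points,
its zeros there are isolated, and by compactness they keep a positive distance from the segment.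
-/

noncomputable def gFun (s : ℝ) (z : ℂ) : ℂ :=
  Complex.Gamma (2 * s - z) * Complex.Gamma (z + 1) / Complex.Gamma (2 * s) -
    Complex.sin (Real.pi * (s - z)) / Complex.sin (Real.pi * s)

open Filter Topology Set Complex
open scoped Real

lemma Real.sin_sub_lt_sin {α β : ℝ} (hα₀ : 0 < α) (hα : α ≤ π / 2) (hβ₀ : 0 < β)
    (hβ : β < π) : Real.sin (α - β) < Real.sin α := by
  have hsin_α : 0 < Real.sin α := Real.sin_pos_of_pos_of_lt_pi hα₀ (by linarith)
  have hcos_α : 0 ≤ Real.cos α := Real.cos_nonneg_of_neg_pi_div_two_le_of_le (by linarith) hα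
  have hsin_β : 0 < Real.sin β := Real.sin_pos_of_pos_of_lt_pi hβ₀ hβ
  have hcos_β : Real.cos β < 1 :=
    Real.cos_zero ▸ Real.cos_lt_cos_of_nonneg_of_le_pi le_rfl hβ.le hβ₀
  rw [Real.sin_sub]
  nlinarith [mul_nonneg hcos_α hsin_β.le]

/-- Log-convexity of `Γ`: `x ↦ log Γ(c - x) + log Γ(x + 1)` is convex and takes the value
`log Γ(c)` at `x = 0` and `x = c - 1`, so it is at least that value beyond `c - 1`. -/
lemma Real.Gamma_le_Gamma_sub_mul_Gamma_add_one {c x : ℝ} (hc : 1 < c) (hx : c - 1 ≤ x)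
    (hxc : x < c) : Real.Gamma c ≤ Real.Gamma (c - x) * Real.Gamma (x + 1) := by
  have hx₀ : 0 < x := by linarith
  set b := (c - 1) / x
  have hb : 0 < b := div_pos (by linarith) hx₀
  have ha : 0 ≤ 1 - b := by rw [sub_nonneg, div_le_one hx₀]; exact hx
  have h₁ := Real.convexOn_log_Gamma.2 (mem_Ioi.mpr (by linarith : (0 : ℝ) < c))
    (mem_Ioi.mpr (by linarith : (0 : ℝ) < c - x)) ha hb.le (sub_add_cancel 1 b)
  have h₂ := Real.convexOn_log_Gamma.2 (mem_Ioi.mpr one_pos)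
    (mem_Ioi.mpr (by linarith : (0 : ℝ) < x + 1)) ha hb.le (sub_add_cancel 1 b)
  have hbx : b * x = c - 1 := div_mul_cancel₀ _ hx₀.ne'
  simp only [smul_eq_mul, Function.comp_apply] at h₁ h₂
  rw [show (1 - b) * c + b * (c - x) = 1 by linear_combination -hbx, Real.Gamma_one,
    Real.log_one] at h₁
  rw [show (1 - b) * 1 + b * (x + 1) = c by linear_combination hbx, Real.Gamma_one,
    Real.log_one] at h₂
  have hΓc : 0 < Real.Gamma c := Real.Gamma_pos_of_pos (by linarith)
  have hΓcx : 0 < Real.Gamma (c - x) := Real.Gamma_pos_of_pos (by linarith)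
  have hΓx : 0 < Real.Gamma (x + 1) := Real.Gamma_pos_of_pos (by linarith)
  have hlog : Real.log (Real.Gamma c) ≤ Real.log (Real.Gamma (c - x) * Real.Gamma (x + 1)) := by
    rw [Real.log_mul hΓcx.ne' hΓx.ne']
    refine le_of_mul_le_mul_left ?_ hb
    nlinarith
  exact (Real.log_le_log_iff hΓc (by positivity)).mp hlog

lemma gFun_ofReal (s x : ℝ) :
    gFun s x = ((Real.Gamma (2 * s - x) * Real.Gamma (x + 1) / Real.Gamma (2 * s) -
      Real.sin (π * (s - x)) / Real.sin (π * s) : ℝ) : ℂ) := by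
  push_cast [← Complex.Gamma_ofReal, Complex.ofReal_sin]
  rfl

lemma gFun_ofReal_ne_zero {s x : ℝ} (hs : s ∈ Ioo (1 / 2 : ℝ) 1)
    (hx : x ∈ Ioo (2 * s - 1) (2 * s)) : gFun s x ≠ 0 := by
  obtain ⟨hs₁, hs₂⟩ := hs
  obtain ⟨hx₁, hx₂⟩ := hx
  have hsin_s : 0 < Real.sin (π * s) :=
    Real.sin_pos_of_pos_of_lt_pi (by positivity) (by nlinarith [Real.pi_pos])
  have hsin : Real.sin (π * (s - x)) < Real.sin (π * s) := by
    have h := Real.sin_sub_lt_sin (α := π * (1 - s)) (β := π * (x - (2 * s - 1)))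
      (by nlinarith [Real.pi_pos]) (by nlinarith [Real.pi_pos]) (by nlinarith [Real.pi_pos])
      (by nlinarith [Real.pi_pos])
    rwa [show π * (1 - s) - π * (x - (2 * s - 1)) = π * (s - x) by ring,
      show π * (1 - s) = π - π * s by ring, Real.sin_pi_sub] at h
  have hΓ := Real.Gamma_le_Gamma_sub_mul_Gamma_add_one (c := 2 * s) (x := x) (by linarith)
    hx₁.le hx₂
  have hΓ₀ : 0 < Real.Gamma (2 * s) := Real.Gamma_pos_of_pos (by linarith)
  rw [gFun_ofReal, Complex.ofReal_ne_zero, sub_ne_zero]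
  exact (lt_of_lt_of_le ((div_lt_one hsin_s).mpr hsin) ((one_le_div hΓ₀).mpr hΓ)).ne'

lemma Complex.differentiableAt_Gamma_of_re_pos {w : ℂ} (hw : 0 < w.re) :
    DifferentiableAt ℂ Gamma w :=
  differentiableAt_Gamma w fun m hm => by
    have := congrArg re hm
    simp only [neg_re, natCast_re] at this
    linarith [m.cast_nonneg (α := ℝ)]

lemma gFun_differentiableAt (s : ℝ) {z : ℂ} (h₁ : -1 < z.re) (h₂ : z.re < 2 * s) :
    DifferentiableAt ℂ (gFun s) z := by
  have hΓ₁ : DifferentiableAt ℂ (fun z : ℂ => Gamma (2 * s - z)) z :=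
    (differentiableAt_Gamma_of_re_pos (by simpa using h₂)).comp z (by fun_prop)
  have hΓ₂ : DifferentiableAt ℂ (fun z : ℂ => Gamma (z + 1)) z :=
    (differentiableAt_Gamma_of_re_pos (by rw [add_re, one_re]; linarith)).comp z (by fun_prop)
  unfold gFun
  fun_prop

lemma gFun_analyticAt (s : ℝ) {z : ℂ} (h₁ : -1 < z.re) (h₂ : z.re < 2 * s) :
    AnalyticAt ℂ (gFun s) z := by
  have hU : IsOpen {w : ℂ | -1 < w.re ∧ w.re < 2 * s} :=
    (isOpen_lt continuous_const continuous_re).inter (isOpen_lt continuous_re continuous_const)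
  exact DifferentiableOn.analyticAt
    (fun w hw => (gFun_differentiableAt s hw.1 hw.2).differentiableWithinAt)
    (hU.mem_nhds ⟨h₁, h₂⟩)

lemma AnalyticAt.eventually_ne_zero_of_mem_closure {𝕜 E : Type*} [NontriviallyNormedField 𝕜]
    [NormedAddCommGroup E] [NormedSpace 𝕜 E] {f : 𝕜 → E} {z₀ : 𝕜} {S : Set 𝕜}
    (hf : AnalyticAt 𝕜 f z₀) (hz₀ : z₀ ∈ closure S) (hS : ∀ z ∈ S, f z ≠ 0) :
    ∀ᶠ z in 𝓝[≠] z₀, f z ≠ 0 := by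
  refine hf.eventually_eq_zero_or_eventually_ne_zero.resolve_left fun hzero => ?_
  obtain ⟨z, hzS, hfz⟩ := ((mem_closure_iff_frequently.mp hz₀).and_eventually hzero).exists
  exact hS z hzS hfz

lemma exists_zero_free_strip {f : ℂ → ℂ} {a b : ℝ} (hab : a < b)
    (hf : ∀ x ∈ Icc a b, AnalyticAt ℂ f x) (hne : ∀ x ∈ Ioo a b, f x ≠ 0) :
    ∃ M > 0, ∀ z : ℂ, z.re ∈ Ioo a b → |z.im| ≤ M → f z ≠ 0 := by
  set K : Set ℂ := ofReal '' Icc a b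
  have hK : IsCompact K := isCompact_Icc.image continuous_ofReal
  have hnear : ∀ᶠ z in 𝓝ˢ K, z.im ≠ 0 → f z ≠ 0 := by
    refine eventually_nhdsSet_iff_forall.mpr ?_
    rintro _ ⟨x, hx, rfl⟩
    have hcl : (x : ℂ) ∈ closure (ofReal '' Ioo a b) :=
      image_closure_subset_closure_image continuous_ofReal ⟨x, by rwa [closure_Ioo hab.ne], rfl⟩
    have hpunct := (hf x hx).eventually_ne_zero_of_mem_closure hcl
      (by rintro _ ⟨y, hy, rfl⟩; exact hne y hy)
    filter_upwards [eventually_nhdsWithin_iff.mp hpunct] with z hz him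
    exact hz fun h => him (by rw [h, ofReal_im])
  obtain ⟨δ, hδ, hstrip⟩ := (Metric.hasBasis_nhdsSet_cthickening hK).eventually_iff.mp hnear
  refine ⟨δ, hδ, fun z hre him => ?_⟩
  by_cases him₀ : z.im = 0
  · rw [← Complex.re_add_im z, him₀, ofReal_zero, zero_mul, add_zero]
    exact hne _ hre
  refine hstrip (Metric.mem_cthickening_of_dist_le z z.re δ K
    ⟨z.re, Ioo_subset_Icc_self hre, rfl⟩ ?_) him₀
  rwa [dist_of_re_eq (by simp), ofReal_im, Real.dist_eq, sub_zero]

theorem gFun_no_zeros_high_s (s : ℝ) (hs : s ∈ Set.Ioo (1/2 : ℝ) 1) :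
    ∃ M > 0, ∀ z : ℂ, z.re ∈ Set.Ioo (2 * s - 1) (s + 1/2) →
      z.im ∈ Set.Icc (0 : ℝ) M → gFun s z ≠ 0 := by
  obtain ⟨hs₁, hs₂⟩ := hs
  obtain ⟨M, hM, hzero⟩ := exists_zero_free_strip (a := 2 * s - 1) (b := s + 1 / 2)
    (f := gFun s) (by linarith)
    (fun x hx => gFun_analyticAt s (by rw [ofReal_re]; linarith [hx.1])
      (by rw [ofReal_re]; linarith [hx.2]))
    (fun x hx => gFun_ofReal_ne_zero ⟨hs₁, hs₂⟩ ⟨hx.1, by linarith [hx.2]⟩)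
  exact ⟨M, hM, fun z hre him => hzero z hre (abs_le.mpr ⟨by linarith [him.1], him.2⟩)⟩
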